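/- arXiv:2401.10579 — 2 statements merged into one kernel-verified Lean document; each statement's English description precedes it below -/
import Mathlib

section
/- For every integer P≥2 and every spooky pebbling strategy (P_0,S_0),…,(P_T,S_T) on the grid DAG G◇_P with pebbling cost exactly P+1, there exist time steps t < t' such that |P_t| = P+1 with (1,1) ∉ P_t, and (1,1) ∈ P_{t'} ∖ P_{t'−1} (that is, at some later time the leaf (1,1) is pebbled or unghosted). -/
variable {V : Type*}

/-- The set of roots (vertices with out-degree 0) of the graph with edge relation `E`. -/
noncomputable def rootFinset [Finite V] (E : V → V → Prop) : Finset V :=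
  (Set.toFinite {v | ∀ w, ¬ E v w}).toFinset

/-- One move of the irreversible pebble game: pebble a vertex whose direct
predecessors are all pebbled, or unpebble any vertex. -/
def IrrevStep [DecidableEq V] (E : V → V → Prop) (A B : Finset V) : Prop :=
  ∃ v : V, (B = insert v A ∧ ∀ w, E w v → w ∈ A) ∨ B = A.erase v

/-- An irreversible pebbling strategy with pebbling time `T`. -/
def IsIrrevStrategy [Finite V] [DecidableEq V] (E : V → V → Prop)
    (P : ℕ → Finset V) (T : ℕ) : Prop :=
  P 0 = ∅ ∧ P T = rootFinset E ∧
    ∀ t, 1 ≤ t → t ≤ T → IrrevStep E (P (t - 1)) (P t)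

/-- One move of the spooky pebble game: pebble, unpebble, ghost or unghost. -/
def SpookyStep [DecidableEq V] (E : V → V → Prop) (A B SA SB : Finset V) : Prop :=
  ∃ v : V,
    (B = insert v A ∧ SB = SA ∧ ∀ w, E w v → w ∈ A) ∨
    (B = A.erase v ∧ SB = SA ∧ ∀ w, E w v → w ∈ A) ∨
    (B = A.erase v ∧ SB = insert v SA) ∨
    (B = insert v A ∧ SB = SA.erase v ∧ ∀ w, E w v → w ∈ A)

/-- A spooky pebbling sub-strategy: the move rules hold, with no boundary conditions. -/
def IsSpookySubStrategy [DecidableEq V] (E : V → V → Prop)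
    (P S : ℕ → Finset V) (T : ℕ) : Prop :=
  ∀ t, 1 ≤ t → t ≤ T → SpookyStep E (P (t - 1)) (P t) (S (t - 1)) (S t)

/-- A spooky pebbling strategy with pebbling time `T`. -/
def IsSpookyStrategy [Finite V] [DecidableEq V] (E : V → V → Prop)
    (P S : ℕ → Finset V) (T : ℕ) : Prop :=
  P 0 = ∅ ∧ S 0 = ∅ ∧ P T = rootFinset E ∧ S T = ∅ ∧
    IsSpookySubStrategy E P S T

/-- The pebbling cost of a strategy of time `T`: the maximal number of pebbles used. -/
def pebCost (P : ℕ → Finset V) (T : ℕ) : ℕ :=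
  (Finset.range (T + 1)).sup fun t => (P t).card

/-- The ghosting cost of a spooky strategy of time `T`: the maximal number of ghosts used. -/
def ghostCost (S : ℕ → Finset V) (T : ℕ) : ℕ :=
  (Finset.range (T + 1)).sup fun t => (S t).card

/-- Acyclicity of the edge relation: no directed cycles. -/
def Acyclic (E : V → V → Prop) : Prop := ∀ v, ¬ Relation.TransGen E v v

/-- The grid DAG `G◇_P` on vertex set `Fin P × Fin P` (0-indexed, so the leaf “(1,1)”
is `(0,0)` and the root “(P,P)” is `(P-1,P-1)`), with edges `(i,j)→(i+1,j)` and
`(i,j)→(i,j+1)`. -/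
def gridE (P : ℕ) (a b : Fin P × Fin P) : Prop :=
  ((b.1 : ℕ) = (a.1 : ℕ) + 1 ∧ b.2 = a.2) ∨
  (b.1 = a.1 ∧ (b.2 : ℕ) = (a.2 : ℕ) + 1)


-- step shape lemmas
lemma spooky_pf_shape [DecidableEq V] {E : V → V → Prop} {A B SA SB : Finset V}
    (h : SpookyStep E A B SA SB) :
    ∃ v, (B = insert v A ∧ ∀ w, E w v → w ∈ A) ∨ B = A.erase v := by
  obtain ⟨v, h⟩ := h
  rcases h with ⟨h1, _, h3⟩ | ⟨h1, _, _⟩ | ⟨h1, _⟩ | ⟨h1, _, h3⟩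
  · exact ⟨v, Or.inl ⟨h1, h3⟩⟩
  · exact ⟨v, Or.inr h1⟩
  · exact ⟨v, Or.inr h1⟩
  · exact ⟨v, Or.inl ⟨h1, h3⟩⟩

lemma spooky_sf_persist [DecidableEq V] {E : V → V → Prop} {A B SA SB : Finset V}
    (h : SpookyStep E A B SA SB) {x : V} (hx : x ∈ SA) : x ∈ SB ∨ x ∈ B := by
  obtain ⟨v, h⟩ := h
  rcases h with ⟨_, h2, _⟩ | ⟨_, h2, _⟩ | ⟨_, h2⟩ | ⟨h1, h2, _⟩
  · exact Or.inl (h2 ▸ hx)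
  · exact Or.inl (h2 ▸ hx)
  · exact Or.inl (h2 ▸ Finset.mem_insert_of_mem hx)
  · by_cases hxv : x = v
    · exact Or.inr (h1 ▸ (hxv ▸ Finset.mem_insert_self v A))
    · exact Or.inl (h2 ▸ Finset.mem_erase.2 ⟨hxv, hx⟩)

lemma spooky_removal [DecidableEq V] {E : V → V → Prop} {A B SA SB : Finset V}
    (h : SpookyStep E A B SA SB) {x : V} (hxA : x ∈ A) (hxB : x ∉ B) :
    (∀ w, E w x → w ∈ A) ∨ x ∈ SB := by
  obtain ⟨v, h⟩ := h
  rcases h with ⟨h1, _, _⟩ | ⟨h1, _, h3⟩ | ⟨h1, h2⟩ | ⟨h1, _, _⟩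
  · exact absurd (h1 ▸ Finset.mem_insert_of_mem hxA) hxB
  · have hxv : x = v := by
      by_contra hne
      exact hxB (h1 ▸ Finset.mem_erase.2 ⟨hne, hxA⟩)
    exact Or.inl (hxv ▸ h3)
  · have hxv : x = v := by
      by_contra hne
      exact hxB (h1 ▸ Finset.mem_erase.2 ⟨hne, hxA⟩)
    exact Or.inr (h2 ▸ (hxv ▸ Finset.mem_insert_self v SA))
  · exact absurd (h1 ▸ Finset.mem_insert_of_mem hxA) hxB

lemma spooky_entry [DecidableEq V] {E : V → V → Prop} {A B SA SB : Finset V}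
    (h : SpookyStep E A B SA SB) {x : V} (hxA : x ∉ A) (hxB : x ∈ B) :
    ∀ w, E w x → w ∈ A := by
  obtain ⟨v, h⟩ := h
  rcases h with ⟨h1, _, h3⟩ | ⟨h1, _, _⟩ | ⟨h1, _⟩ | ⟨h1, _, h3⟩
  · rcases Finset.mem_insert.1 (h1 ▸ hxB) with hxv | hxA'
    · exact hxv ▸ h3
    · exact absurd hxA' hxA
  · exact absurd (Finset.mem_of_mem_erase (h1 ▸ hxB)) hxA
  · exact absurd (Finset.mem_of_mem_erase (h1 ▸ hxB)) hxA
  · rcases Finset.mem_insert.1 (h1 ▸ hxB) with hxv | hxA'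
    · exact hxv ▸ h3
    · exact absurd hxA' hxA

lemma grid_rootFinset (P : ℕ) (hP : 1 ≤ P) :
    rootFinset (gridE P) = {((⟨P-1, by omega⟩ : Fin P), (⟨P-1, by omega⟩ : Fin P))} := by
  ext v
  rw [rootFinset, Set.Finite.mem_toFinset, Finset.mem_singleton]
  constructor
  · intro hv
    simp only [Set.mem_setOf_eq] at hv
    have h1 : (v.1 : ℕ) = P - 1 := by
      by_contra hne
      have hlt : (v.1 : ℕ) + 1 < P := by have := v.1.isLt; omega
      exact hv ((⟨(v.1 : ℕ) + 1, hlt⟩ : Fin P), v.2) (Or.inl ⟨rfl, rfl⟩)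
    have h2 : (v.2 : ℕ) = P - 1 := by
      by_contra hne
      have hlt : (v.2 : ℕ) + 1 < P := by have := v.2.isLt; omega
      exact hv (v.1, (⟨(v.2 : ℕ) + 1, hlt⟩ : Fin P)) (Or.inr ⟨rfl, rfl⟩)
    exact Prod.ext (Fin.ext h1) (Fin.ext h2)
  · rintro rfl w hw
    rcases hw with ⟨h1, _⟩ | ⟨_, h2⟩
    · have := w.1.isLt; simp at h1; omega
    · have := w.2.isLt; simp at h2; omega

lemma grid_pred_ne_root (P : ℕ) (hP : 1 ≤ P) {w x : Fin P × Fin P} (h : gridE P w x) :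
    w ≠ ((⟨P-1, by omega⟩ : Fin P), (⟨P-1, by omega⟩ : Fin P)) := by
  rintro rfl
  rcases h with ⟨h1, _⟩ | ⟨_, h2⟩
  · have := x.1.isLt; simp at h1; omega
  · have := x.2.isLt; simp at h2; omega

lemma grid_exists_pred (P : ℕ) (hP : 1 ≤ P) {x : Fin P × Fin P}
    (hx : x ≠ ((⟨0, by omega⟩ : Fin P), (⟨0, by omega⟩ : Fin P))) :
    ∃ w, gridE P w x ∧ (w.1 : ℕ) + (w.2 : ℕ) + 1 = (x.1 : ℕ) + (x.2 : ℕ) := by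
  have hx' : 1 ≤ (x.1 : ℕ) ∨ 1 ≤ (x.2 : ℕ) := by
    by_contra h
    push_neg at h
    apply hx
    have e1 : (x.1 : ℕ) = 0 := by omega
    have e2 : (x.2 : ℕ) = 0 := by omega
    exact Prod.ext (Fin.ext (by simpa using e1)) (Fin.ext (by simpa using e2))
  rcases hx' with h | h
  · refine ⟨((⟨(x.1 : ℕ) - 1, by have := x.1.isLt; omega⟩ : Fin P), x.2), Or.inl ⟨by simp; omega, rfl⟩, ?_⟩
    simp; omega
  · refine ⟨(x.1, (⟨(x.2 : ℕ) - 1, by have := x.2.isLt; omega⟩ : Fin P)), Or.inr ⟨rfl, by simp; omega⟩, ?_⟩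
    simp; omega

-- generic step-function lemmas
lemma stepFun_mono {r : ℕ → ℕ} {lo hi : ℕ}
    (hstep : ∀ s, lo ≤ s → s < hi → r (s+1) = r s ∨ r (s+1) = r s + 1) :
    ∀ s₁ s₂, lo ≤ s₁ → s₁ ≤ s₂ → s₂ ≤ hi → r s₁ ≤ r s₂ := by
  intro s₁ s₂ h1 h12 h2
  induction s₂, h12 using Nat.le_induction with
  | base => exact le_refl _
  | succ n hn ih =>
      have := hstep n (by omega) (by omega)
      have := ih (by omega)
      omega

lemma stepFun_ivt {r : ℕ → ℕ} {lo hi : ℕ}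
    (hstep : ∀ s, lo ≤ s → s < hi → r (s+1) = r s ∨ r (s+1) = r s + 1) (c : ℕ) :
    ∀ s₁ s₂, lo ≤ s₁ → s₁ ≤ s₂ → s₂ ≤ hi → r s₁ ≤ c → c ≤ r s₂ →
      ∃ s, s₁ ≤ s ∧ s ≤ s₂ ∧ r s = c := by
  intro s₁ s₂ h1 h12 h2 hc1 hc2
  induction s₂, h12 using Nat.le_induction with
  | base => exact ⟨s₁, le_refl _, le_refl _, by omega⟩
  | succ n hn ih =>
      by_cases hcn : c ≤ r n
      · obtain ⟨s, hs1, hs2, hs3⟩ := ih (by omega) hcn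
        exact ⟨s, hs1, by omega, hs3⟩
      · have := hstep n (by omega) (by omega)
        exact ⟨n+1, by omega, le_refl _, by omega⟩

/-- The key invariant: some monotone path from the main antidiagonal (coordinate sum
`P-1`) to the root `(P-1,P-1)` is free of pebbles at all cells of sum `≥ P`.
The path is encoded by its row function `r`. -/
def PInv (P : ℕ) (A : Finset (Fin P × Fin P)) : Prop :=
  ∃ r : ℕ → ℕ,
    (∀ s, P - 1 ≤ s → s < 2*P - 2 → (r (s+1) = r s ∨ r (s+1) = r s + 1)) ∧
    r (2*P - 2) = P - 1 ∧
    (∀ s, P - 1 ≤ s → s ≤ 2*P - 2 → r s < P ∧ s ≤ r s + (P - 1)) ∧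
    (∀ s, P ≤ s → s ≤ 2*P - 2 → ∀ (hi : r s < P) (hj : s - r s < P),
      ((⟨r s, hi⟩ : Fin P), (⟨s - r s, hj⟩ : Fin P)) ∉ A)

lemma PInv_empty (P : ℕ) (hP : 2 ≤ P) : PInv P ∅ := by
  refine ⟨fun _ => P - 1, fun s _ _ => Or.inl rfl, rfl, fun s h1 h2 => ⟨?_, ?_⟩,
    fun s _ _ _ _ => Finset.notMem_empty _⟩
  · show P - 1 < P; omega
  · show s ≤ P - 1 + (P - 1); omega

lemma PInv_erase (P : ℕ) {A : Finset (Fin P × Fin P)} (u : Fin P × Fin P) (h : PInv P A) :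
    PInv P (A.erase u) := by
  obtain ⟨r, h1, h2, h3, h4⟩ := h
  exact ⟨r, h1, h2, h3, fun s hs1 hs2 hi hj hmem =>
    h4 s hs1 hs2 hi hj (Finset.mem_of_mem_erase hmem)⟩

lemma PInv_not_root (P : ℕ) (hP : 2 ≤ P) {A : Finset (Fin P × Fin P)} (h : PInv P A) :
    ((⟨P-1, by omega⟩ : Fin P), (⟨P-1, by omega⟩ : Fin P)) ∉ A := by
  obtain ⟨r, _, h2, h3, h4⟩ := h
  have hr := h4 (2*P-2) (by omega) (le_refl _) (by omega) (by omega)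
  intro hmem
  apply hr
  have : ((⟨r (2*P-2), by omega⟩ : Fin P), (⟨2*P-2 - r (2*P-2), by omega⟩ : Fin P))
      = ((⟨P-1, by omega⟩ : Fin P), (⟨P-1, by omega⟩ : Fin P)) := by
    refine Prod.ext (Fin.ext ?_) (Fin.ext ?_) <;> simp [h2] <;> omega
  rw [this]
  exact hmem


set_option maxHeartbeats 2000000 in
lemma PInv_insert (P : ℕ) (hP : 2 ≤ P) {A : Finset (Fin P × Fin P)} {v : Fin P × Fin P}
    (hpred : ∀ w, gridE P w v → w ∈ A)
    (hcard : ((insert v A).erase ((⟨0, by omega⟩ : Fin P), (⟨0, by omega⟩ : Fin P))).card ≤ P)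
    (hInv : PInv P A) : PInv P (insert v A) := by
  by_cases hvA : v ∈ A
  · rwa [Finset.insert_eq_self.2 hvA]
  obtain ⟨r, h1, h2, h3, h4⟩ := hInv
  by_cases hon : ∃ s, P ≤ s ∧ s ≤ 2*P-2 ∧ (v.1 : ℕ) = r s ∧ (v.2 : ℕ) = s - r s
  case neg =>
    refine ⟨r, h1, h2, h3, fun s hs1 hs2 hi hj hmem => ?_⟩
    rcases Finset.mem_insert.1 hmem with hc | hc
    · exact hon ⟨s, hs1, hs2, by rw [← hc], by rw [← hc]⟩
    · exact h4 s hs1 hs2 hi hj hc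
  case pos =>
  obtain ⟨σ, hσ1, hσ2, hv1, hv2⟩ := hon
  have hrle : ∀ s, P-1 ≤ s → s ≤ 2*P-2 → r s ≤ s := by
    intro s u1 u2; have := h3 s u1 u2; omega
  have hσP : σ = P := by
    by_contra hne
    have hσ3 : P + 1 ≤ σ := by omega
    have hst := h1 (σ-1) (by omega) (by omega)
    have hr3 := h3 (σ-1) (by omega) (by omega)
    have hr3' := h3 σ (by omega) (by omega)
    have hrl := hrle (σ-1) (by omega) (by omega)
    refine h4 (σ-1) (by omega) (by omega) hr3.1 (by omega) (hpred _ ?_)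
    have hs1eq : σ - 1 + 1 = σ := by omega
    rw [hs1eq] at hst
    rcases hst with heq | heq
    · right
      refine ⟨Fin.ext ?_, ?_⟩
      · simp only [hv1, heq]
      · simp only [hv2, heq]; omega
    · left
      refine ⟨?_, Fin.ext ?_⟩
      · simp only [hv1, heq]
      · simp only [hv2, heq]; omega
  rw [hσP] at hv1 hv2
  set a := r P with ha
  have ha2 : a < P := (h3 P (by omega) (by omega)).1
  have ha1 : 1 ≤ a := by have := (h3 P (by omega) (by omega)).2; omega
  have hb : (v.2 : ℕ) = P - a := by omega
  have hw1 : ((⟨a-1, by omega⟩ : Fin P), (⟨P-a, by omega⟩ : Fin P)) ∈ A := by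
    refine hpred _ (Or.inl ⟨?_, Fin.ext ?_⟩)
    · simp only [hv1]; omega
    · simp only [hb]
  have hw2 : ((⟨a, by omega⟩ : Fin P), (⟨P-a-1, by omega⟩ : Fin P)) ∈ A := by
    refine hpred _ (Or.inr ⟨Fin.ext ?_, ?_⟩)
    · simp only [hv1]
    · simp only [hb]; omega
  by_contra hInv'
  have hblock : ∀ r' : ℕ → ℕ,
      (∀ s, P - 1 ≤ s → s < 2*P - 2 → (r' (s+1) = r' s ∨ r' (s+1) = r' s + 1)) →
      r' (2*P - 2) = P - 1 →
      (∀ s, P - 1 ≤ s → s ≤ 2*P - 2 → r' s < P ∧ s ≤ r' s + (P - 1)) →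
      ∃ s, P ≤ s ∧ s ≤ 2*P - 2 ∧ ∀ (hi : r' s < P) (hj : s - r' s < P),
        ((⟨r' s, hi⟩ : Fin P), (⟨s - r' s, hj⟩ : Fin P)) ∈ insert v A := by
    intro r' hs1 hs2 hs3
    by_contra hno
    push_neg at hno
    apply hInv'
    refine ⟨r', hs1, hs2, hs3, fun s u1 u2 hi hj => ?_⟩
    obtain ⟨hi', hj', hnm⟩ := hno s u1 u2
    exact hnm
    -- Family 1: for each row c > a, a blocker in row c, strictly right of the witness path
  have hfam1 : ∀ c, a < c → c ≤ P-1 → ∃ z : Fin P × Fin P, z ∈ A ∧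
      P ≤ (z.1 : ℕ) + (z.2 : ℕ) ∧ (z.1 : ℕ) = c ∧ r ((z.1 : ℕ) + (z.2 : ℕ)) < c := by
    intro c hc1 hc2
    have hex : ∃ s, P ≤ s ∧ s ≤ 2*P-2 ∧ r s = c := by
      obtain ⟨s, u1, u2, u3⟩ := stepFun_ivt h1 c P (2*P-2) (by omega) (by omega) (le_refl _)
        (by omega) (by rw [h2]; omega)
      exact ⟨s, u1, u2, u3⟩
    obtain ⟨sc, ⟨hsc1, hsc2, hsc3⟩, hscmin⟩ :
        ∃ sc, (P ≤ sc ∧ sc ≤ 2*P-2 ∧ r sc = c) ∧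
          ∀ s, s < sc → ¬(P ≤ s ∧ s ≤ 2*P-2 ∧ r s = c) :=
      ⟨Nat.find hex, Nat.find_spec hex, fun s hs => Nat.find_min hex hs⟩
    have hlt : ∀ s, P-1 ≤ s → s < sc → r s < c := by
      intro s u1 u2
      by_cases hsP : s < P
      · have := stepFun_mono h1 s P u1 (by omega) (by omega); omega
      · have hm := stepFun_mono h1 s sc (by omega) (by omega) (by omega)
        have hne : r s ≠ c := fun he => hscmin s u2 ⟨by omega, by omega, he⟩
        omega
    set ρ : ℕ → ℕ := fun s => if s < sc then c else r s with hρ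
    have hρval1 : ∀ s, s < sc → ρ s = c := fun s q => if_pos q
    have hρval2 : ∀ s, ¬ s < sc → ρ s = r s := fun s q => if_neg q
    have hρstep : ∀ s, P-1 ≤ s → s < 2*P-2 → (ρ (s+1) = ρ s ∨ ρ (s+1) = ρ s + 1) := by
      intro s u1 u2
      by_cases q1 : s + 1 < sc
      · left; rw [hρval1 (s+1) q1, hρval1 s (by omega)]
      · by_cases q2 : s < sc
        · have hseq : s + 1 = sc := by omega
          left
          rw [hρval2 (s+1) q1, hρval1 s q2, hseq, hsc3]
        · rw [hρval2 (s+1) q1, hρval2 s q2]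
          exact h1 s u1 u2
    have hρend : ρ (2*P-2) = P-1 := by
      rw [hρval2 (2*P-2) (by omega), h2]
    have hρrange : ∀ s, P-1 ≤ s → s ≤ 2*P-2 → ρ s < P ∧ s ≤ ρ s + (P-1) := by
      intro s u1 u2
      by_cases q : s < sc
      · have hl := hlt s u1 q
        have hr3 := h3 s u1 u2
        rw [hρval1 s q]
        omega
      · rw [hρval2 s q]
        exact h3 s u1 u2
    obtain ⟨s, hs1, hs2, hmem⟩ := hblock ρ hρstep hρend hρrange
    have hri := hρrange s (by omega) hs2
    have hcell := hmem hri.1 (by omega)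
    by_cases q : s < sc
    · have hρs : ρ s = c := hρval1 s q
      have hcP : c < P := by omega
      have hscP : s - c < P := by have := hri.2; omega
      have hzeq : ((⟨ρ s, hri.1⟩ : Fin P), (⟨s - ρ s, by omega⟩ : Fin P))
          = ((⟨c, hcP⟩ : Fin P), (⟨s - c, hscP⟩ : Fin P)) := by
        refine Prod.ext (Fin.ext ?_) (Fin.ext ?_) <;> simp only [hρs]
      rw [hzeq] at hcell
      rcases Finset.mem_insert.1 hcell with he | he
      · exfalso
        have : (v.1 : ℕ) = c := by rw [← he]
        omega
      · refine ⟨_, he, ?_, ?_, ?_⟩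
        · show P ≤ c + (s - c); omega
        · show (c : ℕ) = c; rfl
        · show r (c + (s - c)) < c
          have hcs : c + (s - c) = s := by omega
          rw [hcs]
          exact hlt s (by omega) q
    · exfalso
      have hρs : ρ s = r s := hρval2 s q
      have hri' : r s < P ∧ s ≤ r s + (P-1) := by rw [hρs] at hri; exact hri
      have hzeq : ((⟨ρ s, hri.1⟩ : Fin P), (⟨s - ρ s, by omega⟩ : Fin P))
          = ((⟨r s, hri'.1⟩ : Fin P), (⟨s - r s, by omega⟩ : Fin P)) := by
        refine Prod.ext (Fin.ext ?_) (Fin.ext ?_) <;> simp only [hρs]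
      rw [hzeq] at hcell
      rcases Finset.mem_insert.1 hcell with he | he
      · have hmono := stepFun_mono h1 sc s (by omega) (by omega) (by omega)
        have : (v.1 : ℕ) = r s := by rw [← he]
        omega
      · exact h4 s hs1 hs2 hri'.1 (by omega) he
    -- Family 2: for each column `P-c` (c < a), a blocker strictly above the witness path
  set g : ℕ → ℕ := fun s => s - r s with hg
  have hgval : ∀ s, g s = s - r s := fun s => rfl
  have hgstep : ∀ s, P-1 ≤ s → s < 2*P-2 → (g (s+1) = g s ∨ g (s+1) = g s + 1) := by
    intro s u1 u2
    have q1 := hrle s u1 (by omega)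
    have q2 := hrle (s+1) (by omega) (by omega)
    rw [hgval, hgval]
    rcases h1 s u1 u2 with he | he <;> rw [he] <;> omega
  have hgP : g P = P - a := by rw [hgval]
  have hgend : g (2*P-2) = P - 1 := by rw [hgval, h2]; omega
  have hfam2 : ∀ c, 1 ≤ c → c < a → ∃ z : Fin P × Fin P, z ∈ A ∧
      P ≤ (z.1 : ℕ) + (z.2 : ℕ) ∧ (z.2 : ℕ) = P - c ∧ (z.1 : ℕ) < r ((z.1 : ℕ) + (z.2 : ℕ)) := by
    intro c hc1 hc2
    have hex : ∃ s, P ≤ s ∧ s ≤ 2*P-2 ∧ g s = P - c := by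
      obtain ⟨s, u1, u2, u3⟩ := stepFun_ivt hgstep (P-c) P (2*P-2) (by omega) (by omega)
        (le_refl _) (by rw [hgP]; omega) (by rw [hgend]; omega)
      exact ⟨s, u1, u2, u3⟩
    obtain ⟨sc, ⟨hsc1, hsc2, hsc3⟩, hscmin⟩ :
        ∃ sc, (P ≤ sc ∧ sc ≤ 2*P-2 ∧ g sc = P - c) ∧
          ∀ s, s < sc → ¬(P ≤ s ∧ s ≤ 2*P-2 ∧ g s = P - c) :=
      ⟨Nat.find hex, Nat.find_spec hex, fun s hs => Nat.find_min hex hs⟩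
    have hlt : ∀ s, P-1 ≤ s → s < sc → g s < P - c := by
      intro s u1 u2
      by_cases hsP : s < P
      · have := stepFun_mono hgstep s P u1 (by omega) (by omega)
        rw [hgP] at this; omega
      · have hm := stepFun_mono hgstep s sc (by omega) (by omega) (by omega)
        have hne : g s ≠ P - c := fun he => hscmin s u2 ⟨by omega, by omega, he⟩
        omega
    set ρ : ℕ → ℕ := fun s => if s < sc then s - (P - c) else r s with hρ
    have hρval1 : ∀ s, s < sc → ρ s = s - (P - c) := fun s q => if_pos q
    have hρval2 : ∀ s, ¬ s < sc → ρ s = r s := fun s q => if_neg q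
    have hρstep : ∀ s, P-1 ≤ s → s < 2*P-2 → (ρ (s+1) = ρ s ∨ ρ (s+1) = ρ s + 1) := by
      intro s u1 u2
      by_cases q1 : s + 1 < sc
      · right; rw [hρval1 (s+1) q1, hρval1 s (by omega)]; omega
      · by_cases q2 : s < sc
        · have hseq : s + 1 = sc := by omega
          right
          rw [hρval2 (s+1) q1, hρval1 s q2, hseq]
          have := hgval sc
          have := hrle sc (by omega) (by omega)
          omega
        · rw [hρval2 (s+1) q1, hρval2 s q2]
          exact h1 s u1 u2
    have hρend : ρ (2*P-2) = P-1 := by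
      rw [hρval2 (2*P-2) (by omega), h2]
    have hρrange : ∀ s, P-1 ≤ s → s ≤ 2*P-2 → ρ s < P ∧ s ≤ ρ s + (P-1) := by
      intro s u1 u2
      by_cases q : s < sc
      · have hl := hlt s u1 q
        rw [hgval] at hl
        have hr3 := h3 s u1 u2
        rw [hρval1 s q]
        omega
      · rw [hρval2 s q]
        exact h3 s u1 u2
    obtain ⟨s, hs1, hs2, hmem⟩ := hblock ρ hρstep hρend hρrange
    have hri := hρrange s (by omega) hs2
    have hcell := hmem hri.1 (by omega)
    by_cases q : s < sc
    · have hρs : ρ s = s - (P - c) := hρval1 s q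
      have hl := hlt s (by omega) q
      rw [hgval] at hl
      have hrs := hrle s (by omega) hs2
      have hrow : s - (P - c) < P := by have := (h3 s (by omega) hs2).1; omega
      have hcol : P - c < P := by omega
      have hzeq : ((⟨ρ s, hri.1⟩ : Fin P), (⟨s - ρ s, by omega⟩ : Fin P))
          = ((⟨s - (P - c), hrow⟩ : Fin P), (⟨P - c, hcol⟩ : Fin P)) := by
        refine Prod.ext (Fin.ext ?_) (Fin.ext ?_) <;> simp only [hρs] <;> omega
      rw [hzeq] at hcell
      rcases Finset.mem_insert.1 hcell with he | he
      · exfalso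
        have : (v.2 : ℕ) = P - c := by rw [← he]
        omega
      · refine ⟨_, he, ?_, ?_, ?_⟩
        · show P ≤ (s - (P - c)) + (P - c); omega
        · show (P - c : ℕ) = P - c; rfl
        · show (s - (P - c) : ℕ) < r ((s - (P - c)) + (P - c))
          have hcs : (s - (P - c)) + (P - c) = s := by omega
          rw [hcs]
          omega
    · exfalso
      have hρs : ρ s = r s := hρval2 s q
      have hri' : r s < P ∧ s ≤ r s + (P-1) := by rw [hρs] at hri; exact hri
      have hzeq : ((⟨ρ s, hri.1⟩ : Fin P), (⟨s - ρ s, by omega⟩ : Fin P))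
          = ((⟨r s, hri'.1⟩ : Fin P), (⟨s - r s, by omega⟩ : Fin P)) := by
        refine Prod.ext (Fin.ext ?_) (Fin.ext ?_) <;> simp only [hρs]
      rw [hzeq] at hcell
      rcases Finset.mem_insert.1 hcell with he | he
      · have hmono := stepFun_mono hgstep sc s (by omega) (by omega) (by omega)
        rw [hsc3, hgval] at hmono
        have : (v.2 : ℕ) = s - r s := by rw [← he]
        omega
      · exact h4 s hs1 hs2 hri'.1 (by omega) he
    -- counting: P-2 blockers + the two predecessors of v give P non-leaf pebbles in A
  set D : Finset ℕ := (Finset.Icc 1 (P-1)).erase a with hD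
  have hall : ∀ c : {x // x ∈ D}, ∃ z : Fin P × Fin P, z ∈ A ∧ P ≤ (z.1 : ℕ) + (z.2 : ℕ) ∧
      ((a < (c : ℕ) ∧ (z.1 : ℕ) = (c : ℕ) ∧ r ((z.1 : ℕ) + (z.2 : ℕ)) < (c : ℕ)) ∨
       ((c : ℕ) < a ∧ (z.2 : ℕ) = P - (c : ℕ) ∧ (z.1 : ℕ) < r ((z.1 : ℕ) + (z.2 : ℕ)))) := by
    rintro ⟨c, hc⟩
    have hc' := Finset.mem_erase.1 hc
    have hcI := Finset.mem_Icc.1 hc'.2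
    rcases Ne.lt_or_gt hc'.1 with hlt | hgt
    · obtain ⟨z, hz⟩ := hfam2 c hcI.1 hlt
      exact ⟨z, hz.1, hz.2.1, Or.inr ⟨hlt, hz.2.2.1, hz.2.2.2⟩⟩
    · obtain ⟨z, hz⟩ := hfam1 c hgt hcI.2
      exact ⟨z, hz.1, hz.2.1, Or.inl ⟨hgt, hz.2.2.1, hz.2.2.2⟩⟩
  choose f hf using hall
  have hinj : Set.InjOn f D.attach := by
    intro c _ c' _ heq
    obtain ⟨m1, s1, hc⟩ := hf c
    obtain ⟨m1', s1', hc'⟩ := hf c'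
    rw [heq] at hc
    have : (c : ℕ) = (c' : ℕ) := by
      rcases hc with ⟨u1, u2, u3⟩ | ⟨u1, u2, u3⟩ <;> rcases hc' with ⟨w1, w2, w3⟩ | ⟨w1, w2, w3⟩ <;>
        omega
    exact Subtype.ext this
  set S : Finset (Fin P × Fin P) := D.attach.image f with hS
  have hcardS : S.card = P - 2 := by
    rw [hS, Finset.card_image_of_injOn hinj, Finset.card_attach, hD,
      Finset.card_erase_of_mem (Finset.mem_Icc.2 ⟨ha1, by omega⟩), Nat.card_Icc]
    omega
  have hsum : ∀ z ∈ S, P ≤ (z.1 : ℕ) + (z.2 : ℕ) := by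
    intro z hz
    obtain ⟨c, _, hc⟩ := Finset.mem_image.1 hz
    obtain ⟨_, hle, _⟩ := hf c
    rw [← hc] at *
    exact hle
  have hmemS : ∀ z ∈ S, z ∈ A := by
    intro z hz
    obtain ⟨c, _, hc⟩ := Finset.mem_image.1 hz
    obtain ⟨hmem, _, _⟩ := hf c
    rw [← hc] at *
    exact hmem
  have hSsub : S ⊆ A.erase ((⟨0, by omega⟩ : Fin P), (⟨0, by omega⟩ : Fin P)) := by
    intro z hz
    refine Finset.mem_erase.2 ⟨?_, hmemS z hz⟩
    intro he
    have h0 : (z.1 : ℕ) = 0 := by rw [he]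
    have h0' : (z.2 : ℕ) = 0 := by rw [he]
    have := hsum z hz
    omega
  have hw1' : ((⟨a-1, by omega⟩ : Fin P), (⟨P-a, by omega⟩ : Fin P)) ∈
      A.erase ((⟨0, by omega⟩ : Fin P), (⟨0, by omega⟩ : Fin P)) := by
    refine Finset.mem_erase.2 ⟨?_, hw1⟩
    intro he
    simp only [Prod.ext_iff, Fin.ext_iff] at he
    omega
  have hw2' : ((⟨a, by omega⟩ : Fin P), (⟨P-a-1, by omega⟩ : Fin P)) ∈
      A.erase ((⟨0, by omega⟩ : Fin P), (⟨0, by omega⟩ : Fin P)) := by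
    refine Finset.mem_erase.2 ⟨?_, hw2⟩
    intro he
    simp only [Prod.ext_iff, Fin.ext_iff] at he
    omega
  have hw1S : ((⟨a-1, by omega⟩ : Fin P), (⟨P-a, by omega⟩ : Fin P)) ∉ S := by
    intro hmem
    have := hsum _ hmem
    simp only [Fin.val_mk] at this
    omega
  have hw2S : ((⟨a, by omega⟩ : Fin P), (⟨P-a-1, by omega⟩ : Fin P)) ∉ S := by
    intro hmem
    have := hsum _ hmem
    simp only [Fin.val_mk] at this
    omega
  have hw12 : ((⟨a-1, by omega⟩ : Fin P), (⟨P-a, by omega⟩ : Fin P)) ≠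
      ((⟨a, by omega⟩ : Fin P), (⟨P-a-1, by omega⟩ : Fin P)) := by
    intro he
    simp only [Prod.ext_iff, Fin.ext_iff] at he
    omega
  have hbig : insert ((⟨a-1, by omega⟩ : Fin P), (⟨P-a, by omega⟩ : Fin P))
      (insert ((⟨a, by omega⟩ : Fin P), (⟨P-a-1, by omega⟩ : Fin P)) S) ⊆
      A.erase ((⟨0, by omega⟩ : Fin P), (⟨0, by omega⟩ : Fin P)) := by
    intro z hz
    rcases Finset.mem_insert.1 hz with rfl | hz
    · exact hw1'
    rcases Finset.mem_insert.1 hz with rfl | hz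
    · exact hw2'
    exact hSsub hz
  have hbigcard : P ≤ (A.erase ((⟨0, by omega⟩ : Fin P), (⟨0, by omega⟩ : Fin P))).card := by
    have h0 := Finset.card_le_card hbig
    rw [Finset.card_insert_of_notMem (by
        intro hmem
        rcases Finset.mem_insert.1 hmem with he | hmem
        · exact hw12 he
        · exact hw1S hmem),
      Finset.card_insert_of_notMem hw2S, hcardS] at h0
    omega
  have hvne : v ≠ ((⟨0, by omega⟩ : Fin P), (⟨0, by omega⟩ : Fin P)) := by
    intro he
    rw [he] at hv1
    simp only [Fin.val_mk] at hv1
    omega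
  clear hf hinj hsum hmemS hSsub hblock hfam1 hfam2 hw1S hw2S hw12 hbig h4 h1 h3 hgstep hgval
  have hfinal : P + 1 ≤ ((insert v A).erase ((⟨0, by omega⟩ : Fin P), (⟨0, by omega⟩ : Fin P))).card := by
    have hsub : insert v (A.erase ((⟨0, by omega⟩ : Fin P), (⟨0, by omega⟩ : Fin P))) ⊆
        (insert v A).erase ((⟨0, by omega⟩ : Fin P), (⟨0, by omega⟩ : Fin P)) := by
      intro x hx
      rcases Finset.mem_insert.1 hx with rfl | hx
      · exact Finset.mem_erase.2 ⟨hvne, Finset.mem_insert_self _ _⟩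
      · exact Finset.mem_erase.2 ⟨(Finset.mem_erase.1 hx).1,
          Finset.mem_insert_of_mem (Finset.mem_erase.1 hx).2⟩
    have h0 := Finset.card_le_card hsub
    rw [Finset.card_insert_of_notMem (fun hmem => hvA (Finset.mem_erase.1 hmem).2)] at h0
    omega
  have : P + 1 ≤ P := le_trans hfinal hcard
  omega

/-- For `P ≥ 2`, in every spooky pebbling strategy on the grid DAG
`G◇_P` with pebbling cost exactly `P + 1` there are times `t < t'` such that at time
`t` all `P + 1` pebbles are on the board with none on the leaf `(0,0)` (“(1,1)”), and
at time `t'` the leaf is pebbled or unghosted (it enters the pebble set). -/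
theorem grid_spooky_leaf_repebbled (P : ℕ) (hP : 2 ≤ P)
    (Pf Sf : ℕ → Finset (Fin P × Fin P)) (T : ℕ)
    (hstrat : IsSpookyStrategy (gridE P) Pf Sf T)
    (hcost : pebCost Pf T = P + 1) :
    ∃ t t' : ℕ, t < t' ∧ t' ≤ T ∧
      (Pf t).card = P + 1 ∧
      ((⟨0, by omega⟩ : Fin P), (⟨0, by omega⟩ : Fin P)) ∉ Pf t ∧
      ((⟨0, by omega⟩ : Fin P), (⟨0, by omega⟩ : Fin P)) ∈ Pf t' ∧
      ((⟨0, by omega⟩ : Fin P), (⟨0, by omega⟩ : Fin P)) ∉ Pf (t' - 1) := by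
  classical
  obtain ⟨hP0, hS0, hPT, hST, hsub⟩ := hstrat
  set ℓv : Fin P × Fin P := ((⟨0, by omega⟩ : Fin P), (⟨0, by omega⟩ : Fin P)) with hℓdef
  set rootv : Fin P × Fin P := ((⟨P-1, by omega⟩ : Fin P), (⟨P-1, by omega⟩ : Fin P)) with hrootdef
  have hPT' : Pf T = {rootv} := by rw [hPT]; exact grid_rootFinset P (by omega)
  have hstep : ∀ t, 1 ≤ t → t ≤ T →
      SpookyStep (gridE P) (Pf (t-1)) (Pf t) (Sf (t-1)) (Sf t) := hsub
  have hbound : ∀ t, t ≤ T → (Pf t).card ≤ P + 1 := by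
    intro t ht
    have h0 : (Pf t).card ≤ (Finset.range (T+1)).sup fun t => (Pf t).card :=
      Finset.le_sup (f := fun t => (Pf t).card) (Finset.mem_range.2 (Nat.lt_succ_of_le ht))
    exact le_of_le_of_eq h0 hcost
  have hτex : ∃ τ, τ ≤ T ∧ (Pf τ).card = P + 1 := by
    obtain ⟨i, hi, hieq⟩ := Finset.exists_mem_eq_sup (Finset.range (T+1))
      ⟨0, Finset.mem_range.2 (by omega)⟩ (fun t => (Pf t).card)
    refine ⟨i, by have := Finset.mem_range.1 hi; omega, ?_⟩
    rw [← hieq]; exact hcost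
  set L : (Fin P × Fin P) → ℕ := fun x => Nat.findGreatest (fun t => x ∈ Pf t) T with hLdef
  have hLmem : ∀ x : Fin P × Fin P, (∃ t, t ≤ T ∧ x ∈ Pf t) → x ∈ Pf (L x) := by
    rintro x ⟨t, ht, hx⟩
    exact Nat.findGreatest_spec (P := fun t => x ∈ Pf t) ht hx
  have hLle : ∀ x : Fin P × Fin P, L x ≤ T := fun x => Nat.findGreatest_le T
  have hLge : ∀ (x : Fin P × Fin P) t, t ≤ T → x ∈ Pf t → t ≤ L x :=
    fun x t ht hx => Nat.le_findGreatest (P := fun t => x ∈ Pf t) ht hx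
  have hLmax : ∀ (x : Fin P × Fin P) s, L x < s → s ≤ T → x ∉ Pf s :=
    fun x s h1 h2 hx => absurd (hLge x s h2 hx) (by omega)
  have hrootne : ∀ x : Fin P × Fin P, x ≠ rootv → x ∉ Pf T := by
    intro x hx hmem
    rw [hPT'] at hmem
    exact hx (Finset.mem_singleton.1 hmem)
  have hfinrem : ∀ x : Fin P × Fin P, x ≠ rootv → (∃ t, t ≤ T ∧ x ∈ Pf t) →
      ∀ w, gridE P w x → w ∈ Pf (L x) := by
    intro x hxr hex w hw
    have hx0 := hLmem x hex
    have hLT : L x < T := lt_of_le_of_ne (hLle x) (fun he => hrootne x hxr (he ▸ hx0))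
    have hx1 : x ∉ Pf (L x + 1) := hLmax x (L x + 1) (by omega) (by omega)
    have hs := hstep (L x + 1) (by omega) (by omega)
    rw [(by omega : L x + 1 - 1 = L x)] at hs
    rcases spooky_removal hs hx0 hx1 with hpreds | hsf
    · exact hpreds w hw
    · exfalso
      have hall : ∀ s, L x + 1 ≤ s → s ≤ T → x ∈ Sf s := by
        intro s hs1 hs2
        induction s, hs1 using Nat.le_induction with
        | base => exact hsf
        | succ n hn ih =>
            have hsn := hstep (n+1) (by omega) (by omega)
            rw [(by omega : n + 1 - 1 = n)] at hsn
            rcases spooky_sf_persist hsn (ih (by omega)) with h | h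
            · exact h
            · exact absurd h (hLmax x (n+1) (by omega) (by omega))
      have hT := hall T (by omega) le_rfl
      rw [hST] at hT
      exact Finset.notMem_empty x hT
  have hchain : ∀ n (x : Fin P × Fin P), (x.1 : ℕ) + (x.2 : ℕ) = n → x ≠ rootv →
      (∃ t, t ≤ T ∧ x ∈ Pf t) → (∃ t, t ≤ T ∧ ℓv ∈ Pf t) ∧ L x ≤ L ℓv := by
    intro n
    induction n using Nat.strong_induction_on with
    | _ n ih =>
      intro x hxn hxr hex
      by_cases hxl : x = ℓv
      · subst hxl
        exact ⟨hex, le_rfl⟩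
      · obtain ⟨w, hw, hwsum⟩ := grid_exists_pred P (by omega) hxl
        have hwmem : w ∈ Pf (L x) := hfinrem x hxr hex w hw
        have hwex : ∃ t, t ≤ T ∧ w ∈ Pf t := ⟨L x, hLle x, hwmem⟩
        have hwr : w ≠ rootv := grid_pred_ne_root P (by omega) hw
        have hLw : L x ≤ L w := hLge w (L x) (hLle x) hwmem
        obtain ⟨hl1, hl2⟩ := ih ((w.1 : ℕ) + (w.2 : ℕ)) (by omega) w rfl hwr hwex
        exact ⟨hl1, le_trans hLw hl2⟩
  by_cases hcase : ∃ τ, τ ≤ T ∧ (Pf τ).card = P + 1 ∧ ℓv ∉ Pf τ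
  · obtain ⟨τ, hτT, hτcard, hτℓ⟩ := hcase
    obtain ⟨x, hxmem, hxne⟩ := Finset.exists_mem_ne
      (show 1 < (Pf τ).card by omega) rootv
    have hex : ∃ t, t ≤ T ∧ x ∈ Pf t := ⟨τ, hτT, hxmem⟩
    obtain ⟨hℓex, hLxℓ⟩ := hchain ((x.1 : ℕ) + (x.2 : ℕ)) x rfl hxne hex
    have hτLx : τ ≤ L x := hLge x τ hτT hxmem
    have hℓmem : ℓv ∈ Pf (L ℓv) := hLmem _ hℓex
    have hτLℓ : τ < L ℓv := lt_of_le_of_ne (le_trans hτLx hLxℓ) (fun he => hτℓ (he ▸ hℓmem))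
    have hfind : ∃ s, τ < s ∧ ℓv ∈ Pf s := ⟨L ℓv, hτLℓ, hℓmem⟩
    refine ⟨τ, Nat.find hfind, (Nat.find_spec hfind).1, ?_, hτcard, hτℓ,
      (Nat.find_spec hfind).2, ?_⟩
    · exact le_trans (Nat.find_min' hfind ⟨hτLℓ, hℓmem⟩) (hLle ℓv)
    · have ht'pos : τ < Nat.find hfind := (Nat.find_spec hfind).1
      rcases Nat.lt_or_ge τ (Nat.find hfind - 1) with hlt | hge
      · intro hmem
        exact Nat.find_min hfind (m := Nat.find hfind - 1) (by omega) ⟨hlt, hmem⟩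
      · rw [(by omega : Nat.find hfind - 1 = τ)]
        exact hτℓ
  · push_neg at hcase
    have hcard2 : ∀ t, t ≤ T → ((Pf t).erase ℓv).card ≤ P := by
      intro t ht
      by_cases hm : ℓv ∈ Pf t
      · rw [Finset.card_erase_of_mem hm]
        have := hbound t ht
        omega
      · rw [Finset.erase_eq_of_notMem hm]
        have h1 := hbound t ht
        have h2 : (Pf t).card ≠ P + 1 := fun he => hm (hcase t ht he)
        omega
    have hInvAll : ∀ t, t ≤ T → PInv P (Pf t) := by
      intro t
      induction t with
      | zero => intro _; rw [hP0]; exact PInv_empty P hP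
      | succ n ih =>
        intro hn
        have hs := hstep (n+1) (by omega) hn
        rw [(by omega : n + 1 - 1 = n)] at hs
        obtain ⟨v, hv⟩ := spooky_pf_shape hs
        rcases hv with ⟨hB, hpre⟩ | hB
        · rw [hB]
          refine PInv_insert P hP hpre ?_ (ih (by omega))
          rw [← hB]
          exact hcard2 (n+1) hn
        · rw [hB]
          exact PInv_erase P v (ih (by omega))
    have hfin := hInvAll T le_rfl
    have hrmem : rootv ∈ Pf T := by rw [hPT']; exact Finset.mem_singleton_self _
    exact absurd hrmem (PInv_not_root P hP hfin)
end

section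
/- Let G=(V,E) be a finite DAG with m roots. Then G admits at least one irreversible pebbling strategy and at least one spooky pebbling strategy, and the minimum pebbling cost C_spooky over all spooky pebbling strategies on G and the minimum pebbling cost C_irr over all irreversible pebbling strategies on G satisfy C_irr ≤ C_spooky ≤ C_irr + m. -/
variable {V : Type*}

/-!
Forgetting ghosts turns a spooky strategy into an irreversible one of the same cost. Conversely,
an irreversible strategy of cost `C` is replayed with pebbles as pebbles and unpebbling as
ghosting; it ends with the roots pebbled and some ghosts. Holding the `m` roots pebbled, a ghost
`u` that first entered at time `τ` is removed by replaying the strategy up to `τ - 1`, unghosting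
and unpebbling `u`, and ghosting everything else. The new ghosts all entered before `τ`, so
induction on `τ` clears them within `C + m` pebbles. An irreversible strategy exists since one
may pebble all vertices in topological order and then unpebble the non-roots.
-/

open Relation Finset

theorem Relation.ReflTransGen.exists_seq {α : Type*} {r : α → α → Prop} {a b : α}
    (h : ReflTransGen r a b) :
    ∃ (f : ℕ → α) (T : ℕ), f 0 = a ∧ f T = b ∧ ∀ t, 1 ≤ t → t ≤ T → r (f (t - 1)) (f t) := by
  induction h with
  | refl => exact ⟨fun _ => a, 0, rfl, rfl, fun t h1 h0 => by omega⟩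
  | @tail b c _ hbc ih =>
    obtain ⟨f, T, hf0, hfT, hf⟩ := ih
    refine ⟨fun t => if t ≤ T then f t else c, T + 1, by simp [hf0], by simp, fun t h1 h2 => ?_⟩
    rcases Nat.lt_or_ge T t with hTt | htT
    · obtain rfl : t = T + 1 := by omega
      simpa [hfT] using hbc
    · simpa [htT, show t - 1 ≤ T by omega] using hf t h1 htT

theorem Acyclic.wellFounded_swap [Finite V] {E : V → V → Prop} (h : Acyclic E) :
    WellFounded (Function.swap E) :=
  have : IsTrans V (TransGen (Function.swap E)) := ⟨fun _ _ _ => TransGen.trans⟩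
  have : Std.Irrefl (TransGen (Function.swap E)) := ⟨fun v hv => h v (transGen_swap.1 hv)⟩
  Subrelation.wf TransGen.single (Finite.wellFounded_of_trans_of_irrefl _)

theorem card_le_pebCost {P : ℕ → Finset V} {t T : ℕ} (ht : t ≤ T) : (P t).card ≤ pebCost P T :=
  le_sup (f := fun t => (P t).card) (mem_range.2 (Nat.lt_succ_of_le ht))

section Irreversible

variable [DecidableEq V] {E : V → V → Prop}

theorem IrrevStep.eq_insert_of_notMem_of_mem {A B : Finset V} {u : V} (h : IrrevStep E A B)
    (hA : u ∉ A) (hB : u ∈ B) : B = insert u A ∧ ∀ w, E w u → w ∈ A := by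
  obtain ⟨v, ⟨rfl, hpre⟩ | rfl⟩ := h
  · obtain rfl | hu := mem_insert.1 hB
    · exact ⟨rfl, hpre⟩
    · exact absurd hu hA
  · exact absurd (mem_of_mem_erase hB) hA

theorem reflTransGen_irrevStep_empty [Finite V] (hacyc : Acyclic E) (A : Finset V)
    (hA : ∀ v ∈ A, ∀ w, E w v → w ∈ A) : ReflTransGen (IrrevStep E) ∅ A := by
  induction A using Finset.strongInduction with
  | H A ih =>
    rcases A.eq_empty_or_nonempty with rfl | hne
    · exact .refl
    -- `v` has no successor in `A`, so `A.erase v` is still closed under predecessors.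
    obtain ⟨v, hvA, hmax⟩ := hacyc.wellFounded_swap.has_min (A : Set V) hne
    have hclosed : ∀ u ∈ A.erase v, ∀ w, E w u → w ∈ A.erase v := fun u hu w hw =>
      mem_erase.2 ⟨by rintro rfl; exact hmax u (mem_of_mem_erase hu) hw,
        hA u (mem_of_mem_erase hu) w hw⟩
    refine (ih _ (erase_ssubset hvA) hclosed).tail
      ⟨v, Or.inl ⟨(insert_erase hvA).symm, fun w hw => mem_erase.2 ⟨?_, hA v hvA w hw⟩⟩⟩
    rintro rfl
    exact hmax w hvA hw

theorem reflTransGen_irrevStep_of_subset {A B : Finset V} (hBA : B ⊆ A) :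
    ReflTransGen (IrrevStep E) A B := by
  suffices ∀ D : Finset V, ReflTransGen (IrrevStep E) A (A \ D) by
    simpa only [Finset.sdiff_sdiff_eq_self hBA] using this (A \ B)
  intro D
  induction D using Finset.induction_on with
  | empty => simpa using .refl
  | insert d D _ ih => exact ih.tail ⟨d, Or.inr (sdiff_insert A D d)⟩

theorem exists_irrevStrategy [Fintype V] (hacyc : Acyclic E) :
    ∃ (P : ℕ → Finset V) (T : ℕ), IsIrrevStrategy E P T :=
  ((reflTransGen_irrevStep_empty hacyc univ fun _ _ w _ => mem_univ w).trans
    (reflTransGen_irrevStep_of_subset (subset_univ _))).exists_seq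

theorem IsSpookyStrategy.isIrrevStrategy [Finite V] {P S : ℕ → Finset V} {T : ℕ}
    (h : IsSpookyStrategy E P S T) : IsIrrevStrategy E P T := by
  obtain ⟨h0, -, hT, -, hstep⟩ := h
  refine ⟨h0, hT, fun t h1 h2 => ?_⟩
  obtain ⟨v, ⟨hB, -, hpre⟩ | ⟨hB, -⟩ | ⟨hB, -⟩ | ⟨hB, -, hpre⟩⟩ := hstep t h1 h2
  exacts [⟨v, .inl ⟨hB, hpre⟩⟩, ⟨v, .inr hB⟩, ⟨v, .inr hB⟩, ⟨v, .inl ⟨hB, hpre⟩⟩]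

def pebbledBy (P : ℕ → Finset V) (t : ℕ) : Finset V :=
  (range (t + 1)).biUnion P

theorem pebbledBy_zero (P : ℕ → Finset V) : pebbledBy P 0 = P 0 := by
  simp [pebbledBy]

theorem pebbledBy_succ (P : ℕ → Finset V) (t : ℕ) :
    pebbledBy P (t + 1) = pebbledBy P t ∪ P (t + 1) := by
  rw [pebbledBy, range_add_one, biUnion_insert, union_comm, pebbledBy]

theorem subset_pebbledBy (P : ℕ → Finset V) (t : ℕ) : P t ⊆ pebbledBy P t :=
  subset_biUnion_of_mem P (self_mem_range_succ t)

theorem pebbledBy_subset_succ (P : ℕ → Finset V) (t : ℕ) : pebbledBy P t ⊆ pebbledBy P (t + 1) :=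
  pebbledBy_succ P t ▸ subset_union_left

end Irreversible

section Spooky

variable [DecidableEq V] {E : V → V → Prop} {n : ℕ}

/-- States are pairs (pebbles, ghosts); the move must leave at most `n` pebbles. -/
def BoundedSpookyStep (E : V → V → Prop) (n : ℕ) (x y : Finset V × Finset V) : Prop :=
  SpookyStep E x.1 y.1 x.2 y.2 ∧ y.1.card ≤ n

theorem BoundedSpookyStep.mono {m : ℕ} (hnm : n ≤ m) {x y : Finset V × Finset V}
    (h : BoundedSpookyStep E n x y) : BoundedSpookyStep E m x y :=
  ⟨h.1, h.2.trans hnm⟩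

theorem boundedSpookyStep_unghost {A S : Finset V} {v : V} (hpre : ∀ w, E w v → w ∈ A)
    (hcard : (insert v A).card ≤ n) : BoundedSpookyStep E n (A, S) (insert v A, S.erase v) :=
  ⟨⟨v, .inr (.inr (.inr ⟨rfl, rfl, hpre⟩))⟩, hcard⟩

theorem boundedSpookyStep_unpebble {A S : Finset V} {v : V} (hpre : ∀ w, E w v → w ∈ A)
    (hcard : A.card ≤ n) : BoundedSpookyStep E n (A, S) (A.erase v, S) :=
  ⟨⟨v, .inr (.inl ⟨rfl, rfl, hpre⟩)⟩, card_erase_le.trans hcard⟩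

theorem boundedSpookyStep_ghost {A S : Finset V} (v : V) (hcard : A.card ≤ n) :
    BoundedSpookyStep E n (A, S) (A.erase v, insert v S) :=
  ⟨⟨v, .inr (.inr (.inl ⟨rfl, rfl⟩))⟩, card_erase_le.trans hcard⟩

theorem reflTransGen_ghost_sdiff {A S : Finset V} (hcard : A.card ≤ n) (D : Finset V) :
    ReflTransGen (BoundedSpookyStep E n) (A, S) (A \ D, S ∪ D) := by
  induction D using Finset.induction_on generalizing A S with
  | empty => simpa using .refl
  | insert d D _ ih =>
    have h := ih (A := A.erase d) (S := insert d S) (card_erase_le.trans hcard)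
    rw [erase_sdiff_comm, ← sdiff_insert, insert_union, ← union_insert] at h
    exact .head (boundedSpookyStep_ghost d hcard) h

theorem reflTransGen_erase_ghost {A S : Finset V} {u : V} (hu : u ∉ A)
    (hpre : ∀ w, E w u → w ∈ A) (hcard : (insert u A).card ≤ n) :
    ReflTransGen (BoundedSpookyStep E n) (A, S) (A, S.erase u) := by
  have h := boundedSpookyStep_unpebble (S := S.erase u) (v := u)
    (fun w hw => mem_insert_of_mem (hpre w hw)) hcard
  rw [erase_insert hu] at h
  exact .tail (.single (boundedSpookyStep_unghost hpre hcard)) h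

theorem exists_spookyStrategy_of_reflTransGen [Finite V]
    (h : ReflTransGen (BoundedSpookyStep E n) (∅, ∅) (rootFinset E, ∅)) :
    ∃ (P S : ℕ → Finset V) (T : ℕ), IsSpookyStrategy E P S T ∧ pebCost P T ≤ n := by
  obtain ⟨f, T, hf0, hfT, hf⟩ := h.exists_seq
  refine ⟨fun t => (f t).1, fun t => (f t).2, T,
    ⟨by simp [hf0], by simp [hf0], by simp [hfT], by simp [hfT], fun t h1 h2 => (hf t h1 h2).1⟩,
    Finset.sup_le fun t ht => ?_⟩
  rcases Nat.eq_zero_or_pos t with rfl | hpos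
  · simp [hf0]
  · exact (hf t hpos (Nat.lt_succ_iff.1 (mem_range.1 ht))).2

/-- Replaying one irreversible move while holding `H` pebbled: pebbling becomes unghosting,
and unpebbling a vertex outside `H` becomes ghosting. -/
theorem exists_reflTransGen_of_irrevStep {A B H S : Finset V} (hAB : IrrevStep E A B)
    (hA : (A ∪ H).card ≤ n) (hB : (B ∪ H).card ≤ n) (hSH : Disjoint S H) (hSA : Disjoint S A) :
    ∃ S', ReflTransGen (BoundedSpookyStep E n) (A ∪ H, S) (B ∪ H, S') ∧
      S' ⊆ S ∪ A ∧ Disjoint S' H ∧ Disjoint S' B := by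
  obtain ⟨v, ⟨rfl, hpre⟩ | rfl⟩ := hAB
  · refine ⟨S.erase v, .single ?_, (erase_subset v S).trans subset_union_left,
      disjoint_of_subset_left (erase_subset v S) hSH,
      disjoint_insert_right.2 ⟨notMem_erase v S, disjoint_of_subset_left (erase_subset v S) hSA⟩⟩
    rw [insert_union] at hB ⊢
    exact boundedSpookyStep_unghost (fun w hw => mem_union_left H (hpre w hw)) hB
  by_cases hv : v ∈ A ∧ v ∉ H
  · refine ⟨insert v S, .single ?_, insert_subset (mem_union_right S hv.1) subset_union_left,
      disjoint_insert_left.2 ⟨hv.2, hSH⟩,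
      disjoint_insert_left.2 ⟨notMem_erase v A, disjoint_of_subset_right (erase_subset v A) hSA⟩⟩
    have hBH : (A ∪ H).erase v = A.erase v ∪ H := by
      rw [erase_union_distrib, erase_eq_of_notMem hv.2]
    exact hBH ▸ boundedSpookyStep_ghost v hA
  · have hBH : A.erase v ∪ H = A ∪ H := by
      ext x
      by_cases hx : x = v <;> simp_all
    exact ⟨S, hBH ▸ .refl, subset_union_left, hSH,
      disjoint_of_subset_right (erase_subset v A) hSA⟩

end Spooky

section Replay

variable [DecidableEq V] {E : V → V → Prop} {Pf : ℕ → Finset V} {T : ℕ}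

theorem card_union_le_pebCost {t : ℕ} (ht : t ≤ T) (H : Finset V) :
    (Pf t ∪ H).card ≤ pebCost Pf T + H.card :=
  (card_union_le _ _).trans (Nat.add_le_add_right (card_le_pebCost ht) _)

theorem exists_reflTransGen_replay (h0 : Pf 0 = ∅)
    (hstep : ∀ t, 1 ≤ t → t ≤ T → IrrevStep E (Pf (t - 1)) (Pf t))
    {H S₀ : Finset V} (hS₀ : Disjoint S₀ H) {t : ℕ} (ht : t ≤ T) :
    ∃ S, ReflTransGen (BoundedSpookyStep E (pebCost Pf T + H.card)) (H, S₀) (Pf t ∪ H, S) ∧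
      S ⊆ S₀ ∪ pebbledBy Pf t ∧ Disjoint S H ∧ Disjoint S (Pf t) := by
  induction t with
  | zero => exact ⟨S₀, by rw [h0, empty_union], subset_union_left, hS₀, by simp [h0]⟩
  | succ t ih =>
    obtain ⟨S, hreach, hS, hSH, hSP⟩ := ih (by omega)
    have hstep' : IrrevStep E (Pf t) (Pf (t + 1)) := hstep (t + 1) (by omega) ht
    obtain ⟨S', hreach', hS', hS'H, hS'P⟩ := exists_reflTransGen_of_irrevStep
      hstep' (card_union_le_pebCost (by omega) H)
      (card_union_le_pebCost ht H) hSH hSP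
    refine ⟨S', hreach.trans hreach', hS'.trans ?_, hS'H, hS'P⟩
    exact (union_subset hS (subset_pebbledBy Pf t |>.trans subset_union_right)).trans
      (union_subset_union_right (pebbledBy_subset_succ Pf t))

theorem reflTransGen_clear_ghosts (h0 : Pf 0 = ∅)
    (hstep : ∀ t, 1 ≤ t → t ≤ T → IrrevStep E (Pf (t - 1)) (Pf t))
    (H : Finset V) {t : ℕ} (ht : t ≤ T) {X : Finset V} (hXH : Disjoint X H)
    (hX : X ⊆ pebbledBy Pf t) :
    ReflTransGen (BoundedSpookyStep E (pebCost Pf T + H.card)) (H, X) (H, ∅) := by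
  induction t generalizing X with
  | zero =>
    rw [pebbledBy_zero, h0, subset_empty] at hX
    exact hX ▸ .refl
  | succ t ih =>
    by_cases hXt : X ⊆ pebbledBy Pf t
    · exact ih (by omega) hXH hXt
    -- A ghost `u` first pebbled at time `t + 1` is cleared by replaying the strategy up to `t`.
    obtain ⟨u, huX, hut⟩ := not_subset.1 hXt
    have huP : u ∈ Pf (t + 1) := by
      have := hX huX
      rw [pebbledBy_succ] at this
      exact (mem_union.1 this).resolve_left hut
    have hunot : u ∉ Pf t := fun h => hut (subset_pebbledBy Pf t h)
    have hstep' : IrrevStep E (Pf t) (Pf (t + 1)) := hstep (t + 1) (by omega) ht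
    obtain ⟨hPu, hpre⟩ := hstep'.eq_insert_of_notMem_of_mem hunot huP
    obtain ⟨S, hreplay, hS, hSH, -⟩ := exists_reflTransGen_replay h0 hstep hXH (t := t) (by omega)
    have huH : u ∉ Pf t ∪ H := by simp [hunot, disjoint_left.1 hXH huX]
    have hclear := reflTransGen_erase_ghost (E := E) (n := pebCost Pf T + H.card) (S := S) huH
      (fun w hw => mem_union_left H (hpre w hw))
      (by rw [← insert_union, ← hPu]; exact card_union_le_pebCost ht H)
    have hghost := reflTransGen_ghost_sdiff (E := E) (S := S.erase u)
      (card_union_le_pebCost (Pf := Pf) (t := t) (T := T) (by omega) H) (Pf t \ H)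
    rw [show (Pf t ∪ H) \ (Pf t \ H) = H by ext; simp only [mem_sdiff, mem_union]; tauto] at hghost
    refine hreplay.trans (hclear.trans (hghost.trans (ih (by omega) ?_ ?_)))
    · exact disjoint_union_left.2 ⟨disjoint_of_subset_left (erase_subset u S) hSH, sdiff_disjoint⟩
    refine union_subset (fun x hx => ?_) (sdiff_subset.trans (subset_pebbledBy Pf t))
    obtain ⟨hxu, hxS⟩ := mem_erase.1 hx
    rcases mem_union.1 (hS hxS) with hxX | hxP
    · have := hX hxX
      rw [pebbledBy_succ, hPu] at this
      simp only [mem_union, mem_insert, hxu, false_or] at this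
      exact this.elim id (subset_pebbledBy Pf t ·)
    · exact hxP

theorem exists_spookyStrategy_of_irrevStrategy [Finite V] (h : IsIrrevStrategy E Pf T) :
    ∃ (P S : ℕ → Finset V) (T' : ℕ), IsSpookyStrategy E P S T' ∧
      pebCost P T' ≤ pebCost Pf T + (rootFinset E).card := by
  obtain ⟨h0, hT, hstep⟩ := h
  obtain ⟨G, hreplay, hG, -, hGP⟩ :=
    exists_reflTransGen_replay h0 hstep (H := ∅) (disjoint_empty_right ∅) le_rfl
  rw [union_empty, hT, card_empty, add_zero] at hreplay
  rw [empty_union] at hG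
  rw [hT] at hGP
  have hreplay' : ReflTransGen (BoundedSpookyStep E (pebCost Pf T + (rootFinset E).card))
      (∅, ∅) (rootFinset E, G) :=
    ReflTransGen.mono (fun _ _ => BoundedSpookyStep.mono (Nat.le_add_right _ _)) _ _ hreplay
  exact exists_spookyStrategy_of_reflTransGen
    (hreplay'.trans (reflTransGen_clear_ghosts h0 hstep _ le_rfl hGP hG))

end Replay

theorem Nat.sInf_le_sInf_add {A B : Set ℕ} {m : ℕ} (hA : A.Nonempty)
    (h : ∀ a ∈ A, ∃ b ∈ B, b ≤ a + m) : sInf B ≤ sInf A + m := by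
  obtain ⟨b, hb, hle⟩ := h _ (Nat.sInf_mem hA)
  exact (Nat.sInf_le hb).trans hle

/-- A finite DAG with `m` roots admits at least one irreversible and at
least one spooky pebbling strategy, and the minimal pebbling costs satisfy
`C_irr ≤ C_spooky ≤ C_irr + m`. -/
theorem min_costs_compare {V : Type*} [Fintype V] [DecidableEq V]
    (E : V → V → Prop) (hacyc : Acyclic E) :
    (∃ (Pf : ℕ → Finset V) (T : ℕ), IsIrrevStrategy E Pf T) ∧
    (∃ (Pf Sf : ℕ → Finset V) (T : ℕ), IsSpookyStrategy E Pf Sf T) ∧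
    sInf {C : ℕ | ∃ (Pf : ℕ → Finset V) (T : ℕ),
        IsIrrevStrategy E Pf T ∧ pebCost Pf T = C} ≤
      sInf {C : ℕ | ∃ (Pf Sf : ℕ → Finset V) (T : ℕ),
        IsSpookyStrategy E Pf Sf T ∧ pebCost Pf T = C} ∧
    sInf {C : ℕ | ∃ (Pf Sf : ℕ → Finset V) (T : ℕ),
        IsSpookyStrategy E Pf Sf T ∧ pebCost Pf T = C} ≤
      sInf {C : ℕ | ∃ (Pf : ℕ → Finset V) (T : ℕ),
        IsIrrevStrategy E Pf T ∧ pebCost Pf T = C} + (rootFinset E).card := by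
  obtain ⟨P₀, T₀, hirr₀⟩ := exists_irrevStrategy hacyc
  obtain ⟨P₁, S₁, T₁, hspooky₁, -⟩ := exists_spookyStrategy_of_irrevStrategy hirr₀
  refine ⟨⟨P₀, T₀, hirr₀⟩, ⟨P₁, S₁, T₁, hspooky₁⟩, ?_, ?_⟩
  · exact csInf_le_csInf (OrderBot.bddBelow _) ⟨_, P₁, S₁, T₁, hspooky₁, rfl⟩
      fun _ ⟨P, S, T, hspooky, hC⟩ => ⟨P, T, hspooky.isIrrevStrategy, hC⟩
  · refine Nat.sInf_le_sInf_add ⟨_, P₀, T₀, hirr₀, rfl⟩ fun _ ⟨P, T, hirr, hC⟩ => ?_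
    obtain ⟨P', S', T', hspooky, hle⟩ := exists_spookyStrategy_of_irrevStrategy hirr
    exact ⟨_, ⟨P', S', T', hspooky, rfl⟩, hC ▸ hle⟩
end
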